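/- Over {a<b<c}, let w = a b^α c b^β a b^γ c b^δ a with α, β, γ, δ ≥ 1. If no word in the M-equivalence class of w contains ac or ca as a factor, then α = δ = 1. -/

import Mathlib

open List

/-- Number of occurrences of `v` as a scattered subsequence of `w`. -/
def scount {α : Type*} [DecidableEq α] (w v : List α) : ℕ := w.sublists.count v

/-- The ternary ordered alphabet {a < b < c}. -/
inductive ABC | a | b | c
deriving DecidableEq

open ABC

/-- M-equivalence over the ordered alphabet {a < b < c}. -/
def MEq3 (w w' : List ABC) : Prop :=
  scount w [a] = scount w' [a] ∧ scount w [b] = scount w' [b] ∧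
  scount w [c] = scount w' [c] ∧ scount w [a, b] = scount w' [a, b] ∧
  scount w [b, c] = scount w' [b, c] ∧ scount w [a, b, c] = scount w' [a, b, c]

/-- Projection onto {a, c}: erase all b's. -/
def projAC (w : List ABC) : List ABC := w.filter (· ≠ b)

abbrev A (k : ℕ) : List ABC := List.replicate k a
abbrev B (k : ℕ) : List ABC := List.replicate k b
abbrev C (k : ℕ) : List ABC := List.replicate k c

/-!
Moving b's around preserves the counts of a, b and c, and for a word
`b^x₀ a b^x₁ c b^x₂ a b^x₃ c b^x₄ a b^x₅` the counts of ab, bc and abc are linear in the `xᵢ`.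
Solving the resulting linear system with `x₁ = 0` (a factor `ac`) gives a one-parameter family of
words M-equivalent to `w`, available for the parameter `x` when `2x ≤ α` and `2α ≤ δ + 3x`; with
`x₄ = 0` (a factor `ca`) one gets a family available for `t` when `2t ≤ δ` and `2δ ≤ α + 3t`.
For `x = ⌊α/2⌋` and `t = ⌊δ/2⌋` one of the two applies unless `α = δ = 1`.
-/

section SubwordCount

variable {α : Type*} [DecidableEq α]

lemma scount_eq_count_sublists' (w v : List α) : scount w v = w.sublists'.count v := by
  unfold scount
  rw [count_eq_countP, count_eq_countP]
  exact w.sublists_perm_sublists'.countP_eq _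

@[simp]
lemma scount_nil_right (w : List α) : scount w [] = 1 := by
  induction w with
  | nil => rfl
  | cons x w ih =>
    rw [scount_eq_count_sublists'] at *
    rw [sublists'_cons, count_append, ih, add_eq_left, count_eq_zero]
    simp

@[simp]
lemma scount_nil_cons (y : α) (v : List α) : scount [] (y :: v) = 0 := by
  simp [scount]

@[simp]
lemma scount_cons_cons (x y : α) (w v : List α) :
    scount (x :: w) (y :: v) = scount w (y :: v) + if y = x then scount w v else 0 := by
  rw [scount_eq_count_sublists', scount_eq_count_sublists', sublists'_cons, count_append]
  congr 1
  split_ifs with h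
  · subst h
    rw [scount_eq_count_sublists']
    exact count_map_of_injective _ _ cons_injective _
  · refine count_eq_zero.2 fun hmem => ?_
    obtain ⟨u, -, hu⟩ := mem_map.1 hmem
    exact h (cons.inj hu).1.symm

@[simp]
lemma scount_replicate_append_of_notMem_head? (x : α) (k : ℕ) (w v : List α)
    (hv : x ∉ v.head?) : scount (replicate k x ++ w) v = scount w v := by
  induction k with
  | zero => rfl
  | succ k ih =>
    cases v with
    | nil => simp
    | cons y v =>
      have hyx : y ≠ x := fun h => hv (by simp [h])
      simpa [replicate_succ, hyx] using ih

@[simp]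
lemma scount_replicate_append_cons (x : α) (k : ℕ) (w v : List α)
    (hv : x ∉ v.head?) :
    scount (replicate k x ++ w) (x :: v) = scount w (x :: v) + k * scount w v := by
  induction k with
  | zero => simp
  | succ k ih =>
    rw [replicate_succ, cons_append, scount_cons_cons, if_pos rfl, ih,
      scount_replicate_append_of_notMem_head? x k w v hv]
    ring

@[simp]
lemma scount_replicate_of_notMem_head? (x : α) (k : ℕ) (v : List α) (hv : x ∉ v.head?) :
    scount (replicate k x) v = scount [] v := by
  simpa using scount_replicate_append_of_notMem_head? x k [] v hv

@[simp]
lemma scount_replicate_cons (x : α) (k : ℕ) (v : List α) (hv : x ∉ v.head?) :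
    scount (replicate k x) (x :: v) = k * scount [] v := by
  simpa using scount_replicate_append_cons x k [] v hv

end SubwordCount

lemma exists_meq3_infix_ac (α β γ δ x : ℕ) (hxα : 2 * x ≤ α) (hαδ : 2 * α ≤ δ + 3 * x) :
    ∃ W, MEq3 ([a] ++ B α ++ [c] ++ B β ++ [a] ++ B γ ++ [c] ++ B δ ++ [a]) W ∧ [a, c] <:+: W := by
  refine ⟨B x ++ [a, c] ++ (B (2 * α + β - 4 * x) ++ [a] ++ B (γ + 2 * x) ++ [c] ++
    B (δ + 3 * x - 2 * α) ++ [a] ++ B (α - 2 * x)), ?_, infix_append _ _ _⟩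
  simp [MEq3, B]
  omega

lemma exists_meq3_infix_ca (α β γ δ t : ℕ) (htδ : 2 * t ≤ δ) (hδα : 2 * δ ≤ α + 3 * t) :
    ∃ W, MEq3 ([a] ++ B α ++ [c] ++ B β ++ [a] ++ B γ ++ [c] ++ B δ ++ [a]) W ∧ [c, a] <:+: W := by
  refine ⟨B (δ - 2 * t) ++ [a] ++ B (α + 3 * t - 2 * δ) ++ [c] ++ B (β + 2 * t) ++ [a] ++
    B (γ + 2 * δ - 4 * t) ++ [c, a] ++ B t, ?_, infix_append _ _ _⟩
  simp [MEq3, B]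
  omega

theorem stmt_12_general (α β γ δ : ℕ)
    (hnd : ∀ w' : List ABC,
      MEq3 ([a] ++ B α ++ [c] ++ B β ++ [a] ++ B γ ++ [c] ++ B δ ++ [a]) w' →
      ¬ [a, c] <:+: w' ∧ ¬ [c, a] <:+: w') :
    α = 1 ∧ δ = 1 := by
  by_contra hne
  have hcases : 2 * α ≤ δ + 3 * (α / 2) ∨ 2 * δ ≤ α + 3 * (δ / 2) := by omega
  rcases hcases with h | h
  · obtain ⟨W, hW, hac⟩ := exists_meq3_infix_ac α β γ δ (α / 2) (Nat.mul_div_le α 2) h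
    exact (hnd W hW).1 hac
  · obtain ⟨W, hW, hca⟩ := exists_meq3_infix_ca α β γ δ (δ / 2) (Nat.mul_div_le δ 2) h
    exact (hnd W hW).2 hca

theorem stmt_12 (α β γ δ : ℕ)
    (hα : 1 ≤ α) (hβ : 1 ≤ β) (hγ : 1 ≤ γ) (hδ : 1 ≤ δ)
    (hnd : ∀ w' : List ABC,
      MEq3 ([a] ++ B α ++ [c] ++ B β ++ [a] ++ B γ ++ [c] ++ B δ ++ [a]) w' →
      ¬ [a, c] <:+: w' ∧ ¬ [c, a] <:+: w') :
    α = 1 ∧ δ = 1 :=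
  stmt_12_general α β γ δ hnd
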